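/- Suppose φ_a is a smooth covector field on ℝ⁴ such that h_{ab} = ∂_a φ_b + ∂_b φ_a satisfies F_a = 0 (where F_a is the trace of its Fierz tensor) — equivalently ∂_a f^{ab} = 0 for f_{ab} = ∂_a φ_b − ∂_b φ_a. Then the Fierz tensor of h_{ab} equals F_{abc} = (1/2)∂_c f_{ab}. -/

import Mathlib

noncomputable section

/-- Minkowski metric `diag(+1,-1,-1,-1)` on `Fin 4` (same matrix raises/lowers indices). -/
def eta (a b : Fin 4) : ℝ := if a = b then (if a = 0 then 1 else -1) else 0

/-- Partial derivative in the coordinate direction `a` on `ℝ⁴ = (Fin 4 → ℝ)`. -/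
def pd (a : Fin 4) (f : (Fin 4 → ℝ) → ℝ) : (Fin 4 → ℝ) → ℝ :=
  fun x => fderiv ℝ f x (Pi.single a 1)

lemma pd_add {f g : (Fin 4 → ℝ) → ℝ} {x : Fin 4 → ℝ} (a : Fin 4)
    (hf : DifferentiableAt ℝ f x) (hg : DifferentiableAt ℝ g x) :
    pd a (fun y => f y + g y) x = pd a f x + pd a g x := by
  simp only [pd, fderiv_fun_add hf hg, ContinuousLinearMap.add_apply]

lemma pd_sub {f g : (Fin 4 → ℝ) → ℝ} {x : Fin 4 → ℝ} (a : Fin 4)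
    (hf : DifferentiableAt ℝ f x) (hg : DifferentiableAt ℝ g x) :
    pd a (fun y => f y - g y) x = pd a f x - pd a g x := by
  simp only [pd, fderiv_fun_sub hf hg, ContinuousLinearMap.sub_apply]

lemma pd_cmul {f : (Fin 4 → ℝ) → ℝ} {x : Fin 4 → ℝ} (a : Fin 4) (c : ℝ)
    (hf : DifferentiableAt ℝ f x) :
    pd a (fun y => c * f y) x = c * pd a f x := by
  simp only [pd, fderiv_const_mul hf, ContinuousLinearMap.smul_apply, smul_eq_mul]

lemma pd_sum {ι : Type*} (s : Finset ι) (F : ι → (Fin 4 → ℝ) → ℝ) {x : Fin 4 → ℝ} (a : Fin 4)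
    (hF : ∀ i ∈ s, DifferentiableAt ℝ (F i) x) :
    pd a (fun y => ∑ i ∈ s, F i y) x = ∑ i ∈ s, pd a (F i) x := by
  simp only [pd]
  rw [fderiv_fun_sum hF]
  simp

lemma contDiff_pd {g : (Fin 4 → ℝ) → ℝ} (hg : ContDiff ℝ (⊤ : ℕ∞) g) (b : Fin 4) :
    ContDiff ℝ (⊤ : ℕ∞) (pd b g) := by
  have h1 : ContDiff ℝ (⊤ : ℕ∞) (fderiv ℝ g) := hg.fderiv_right (by simp)
  exact h1.clm_apply contDiff_const

lemma pd_comm {g : (Fin 4 → ℝ) → ℝ} (hg : ContDiff ℝ (⊤ : ℕ∞) g) (a b : Fin 4) (x : Fin 4 → ℝ) :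
    pd a (pd b g) x = pd b (pd a g) x := by
  have hf : ∀ y, HasFDerivAt g (fderiv ℝ g y) y :=
    fun y => (hg.differentiable (by simp) y).hasFDerivAt
  have hx : HasFDerivAt (fderiv ℝ g) (fderiv ℝ (fderiv ℝ g) x) x :=
    (((hg.fderiv_right (m := (⊤ : ℕ∞)) (by simp)).differentiable (by simp)) x).hasFDerivAt
  have key : ∀ v w : Fin 4 → ℝ,
      fderiv ℝ (fun y => fderiv ℝ g y v) x w = fderiv ℝ (fderiv ℝ g) x w v := by
    intro v w
    have hL : HasFDerivAt (fun y => fderiv ℝ g y v)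
        ((ContinuousLinearMap.apply ℝ ℝ v).comp (fderiv ℝ (fderiv ℝ g) x)) x :=
      (ContinuousLinearMap.apply ℝ ℝ v).hasFDerivAt.comp x hx
    rw [hL.fderiv]; rfl
  show fderiv ℝ (fun y => fderiv ℝ g y (Pi.single b 1)) x (Pi.single a 1)
      = fderiv ℝ (fun y => fderiv ℝ g y (Pi.single a 1)) x (Pi.single b 1)
  rw [key, key]
  exact second_derivative_symmetric hf hx _ _
lemma eta00 : eta 0 0 = 1 := rfl
lemma eta01 : eta 0 1 = 0 := rfl
lemma eta02 : eta 0 2 = 0 := rfl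
lemma eta03 : eta 0 3 = 0 := rfl
lemma eta10 : eta 1 0 = 0 := rfl
lemma eta11 : eta 1 1 = (-1) := rfl
lemma eta12 : eta 1 2 = 0 := rfl
lemma eta13 : eta 1 3 = 0 := rfl
lemma eta20 : eta 2 0 = 0 := rfl
lemma eta21 : eta 2 1 = 0 := rfl
lemma eta22 : eta 2 2 = (-1) := rfl
lemma eta23 : eta 2 3 = 0 := rfl
lemma eta30 : eta 3 0 = 0 := rfl
lemma eta31 : eta 3 1 = 0 := rfl
lemma eta32 : eta 3 2 = 0 := rfl
lemma eta33 : eta 3 3 = (-1) := rfl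


/-- Trace `h = η^{ab} h_{ab}`. -/
def trH (h : (Fin 4 → ℝ) → Fin 4 → Fin 4 → ℝ) : (Fin 4 → ℝ) → ℝ :=
  fun x => ∑ a : Fin 4, ∑ b : Fin 4, eta a b * h x a b

/-- Divergence `∂_d h^d{}_a`. -/
def divH (h : (Fin 4 → ℝ) → Fin 4 → Fin 4 → ℝ) (a : Fin 4) : (Fin 4 → ℝ) → ℝ :=
  fun x => ∑ d : Fin 4, ∑ d' : Fin 4, eta d d' * pd d (fun y => h y d' a) x

/-- The Fierz tensor of `h_{ab}`. -/
def Fierz (h : (Fin 4 → ℝ) → Fin 4 → Fin 4 → ℝ) (a b c : Fin 4) : (Fin 4 → ℝ) → ℝ :=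
  fun x => (1/2) * (pd a (fun y => h y b c) x - pd b (fun y => h y a c) x
    + divH h a x * eta b c - divH h b x * eta a c
    - pd a (trH h) x * eta b c + pd b (trH h) x * eta a c)

set_option maxHeartbeats 1000000 in
/-- if `h_{ab} = ∂_a φ_b + ∂_b φ_a` satisfies `F_a = 0`
(the trace of its Fierz tensor vanishes, equivalently `∂_a f^{ab} = 0` for
`f_{ab} = ∂_a φ_b − ∂_b φ_a`), then the Fierz tensor of `h` is `(1/2)∂_c f_{ab}`. -/
theorem fierz_of_pure_gauge_in_Fa_zero_gauge
    (φ : (Fin 4 → ℝ) → Fin 4 → ℝ)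
    (hφ : ∀ a : Fin 4, ContDiff ℝ (⊤ : ℕ∞) fun x => φ x a)
    (h : (Fin 4 → ℝ) → Fin 4 → Fin 4 → ℝ)
    (hdef : ∀ x, ∀ a b : Fin 4,
      h x a b = pd a (fun y => φ y b) x + pd b (fun y => φ y a) x)
    (f : (Fin 4 → ℝ) → Fin 4 → Fin 4 → ℝ)
    (fdef : ∀ x, ∀ a b : Fin 4,
      f x a b = pd a (fun y => φ y b) x - pd b (fun y => φ y a) x)
    (htrace : ∀ x, ∀ a : Fin 4,
      (∑ b : Fin 4, ∑ b' : Fin 4, eta b b' * Fierz h a b b' x) = 0) :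
    ∀ x, ∀ a b c : Fin 4,
      Fierz h a b c x = (1/2) * pd c (fun y => f y a b) x := by
  intro x a b c
  have hd : ∀ (e c' : Fin 4), Differentiable ℝ (pd e (fun y => φ y c')) :=
    fun e c' => (contDiff_pd (hφ c') e).differentiable (by simp)
  have Ssym : ∀ (d e c' : Fin 4),
      pd d (pd e (fun y => φ y c')) x = pd e (pd d (fun y => φ y c')) x :=
    fun d e c' => pd_comm (hφ c') d e x
  have pdH : ∀ (d b' c' : Fin 4) (z : Fin 4 → ℝ),
      pd d (fun y => h y b' c') z
        = pd d (pd b' (fun y => φ y c')) z + pd d (pd c' (fun y => φ y b')) z := by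
    intro d b' c' z
    have : (fun y => h y b' c')
        = fun y => pd b' (fun w => φ w c') y + pd c' (fun w => φ w b') y :=
      funext fun y => hdef y b' c'
    rw [this]
    exact pd_add d (hd b' c' z) (hd c' b' z)
  have hdivS : ∀ d : Fin 4, divH h d x
      = (pd 0 (pd 0 (fun y => φ y d)) x + pd 0 (pd d (fun y => φ y 0)) x)
      - (pd 1 (pd 1 (fun y => φ y d)) x + pd 1 (pd d (fun y => φ y 1)) x)
      - (pd 2 (pd 2 (fun y => φ y d)) x + pd 2 (pd d (fun y => φ y 2)) x)
      - (pd 3 (pd 3 (fun y => φ y d)) x + pd 3 (pd d (fun y => φ y 3)) x) := by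
    intro d
    simp only [divH, Fin.sum_univ_four, eta00, eta01, eta02, eta03, eta10, eta11, eta12, eta13,
      eta20, eta21, eta22, eta23, eta30, eta31, eta32, eta33, pdH]
    ring
  have htrS : ∀ d : Fin 4, pd d (trH h) x
      = 2 * pd d (pd 0 (fun y => φ y 0)) x - 2 * pd d (pd 1 (fun y => φ y 1)) x
      - 2 * pd d (pd 2 (fun y => φ y 2)) x - 2 * pd d (pd 3 (fun y => φ y 3)) x := by
    intro d
    have htr : trH h = fun y => 2 * pd 0 (fun w => φ w 0) y - 2 * pd 1 (fun w => φ w 1) y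
        - 2 * pd 2 (fun w => φ w 2) y - 2 * pd 3 (fun w => φ w 3) y := by
      funext y
      simp only [trH, Fin.sum_univ_four, hdef, eta00, eta01, eta02, eta03, eta10, eta11, eta12,
        eta13, eta20, eta21, eta22, eta23, eta30, eta31, eta32, eta33]
      ring
    rw [htr]
    have d0 : DifferentiableAt ℝ (fun y => 2 * pd 0 (fun w => φ w 0) y) x :=
      ((hd 0 0) x).const_mul 2
    have d1 : DifferentiableAt ℝ (fun y => 2 * pd 1 (fun w => φ w 1) y) x :=
      ((hd 1 1) x).const_mul 2
    have d2 : DifferentiableAt ℝ (fun y => 2 * pd 2 (fun w => φ w 2) y) x :=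
      ((hd 2 2) x).const_mul 2
    have d3 : DifferentiableAt ℝ (fun y => 2 * pd 3 (fun w => φ w 3) y) x :=
      ((hd 3 3) x).const_mul 2
    rw [pd_sub d ((d0.fun_sub d1).fun_sub d2) d3, pd_sub d (d0.fun_sub d1) d2, pd_sub d d0 d1,
      pd_cmul d 2 ((hd 0 0) x), pd_cmul d 2 ((hd 1 1) x), pd_cmul d 2 ((hd 2 2) x),
      pd_cmul d 2 ((hd 3 3) x)]
  have key0 : divH h 0 x = pd 0 (trH h) x := by
    have T := htrace x 0
    simp only [Fin.sum_univ_four, Fierz, eta00, eta01, eta02, eta03, eta10, eta11, eta12, eta13,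
      eta20, eta21, eta22, eta23, eta30, eta31, eta32, eta33, pdH, hdivS, htrS] at T
    rw [hdivS, htrS]
    linarith [Ssym 0 1 0, Ssym 0 1 1, Ssym 0 2 0, Ssym 0 2 2, Ssym 0 3 0, Ssym 0 3 3,
      Ssym 0 0 0, Ssym 1 1 0, Ssym 2 2 0, Ssym 3 3 0, Ssym 0 1 2, Ssym 0 1 3,
      Ssym 0 2 1, Ssym 0 2 3, Ssym 0 3 1, Ssym 0 3 2]
  have key1 : divH h 1 x = pd 1 (trH h) x := by
    have T := htrace x 1
    simp only [Fin.sum_univ_four, Fierz, eta00, eta01, eta02, eta03, eta10, eta11, eta12, eta13,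
      eta20, eta21, eta22, eta23, eta30, eta31, eta32, eta33, pdH, hdivS, htrS] at T
    rw [hdivS, htrS]
    linarith [Ssym 0 1 0, Ssym 0 1 1, Ssym 1 2 1, Ssym 1 2 2, Ssym 1 3 1, Ssym 1 3 3,
      Ssym 1 1 1, Ssym 0 0 1, Ssym 2 2 1, Ssym 3 3 1, Ssym 0 1 2, Ssym 0 1 3,
      Ssym 1 2 0, Ssym 1 2 3, Ssym 1 3 0, Ssym 1 3 2]
  have key2 : divH h 2 x = pd 2 (trH h) x := by
    have T := htrace x 2
    simp only [Fin.sum_univ_four, Fierz, eta00, eta01, eta02, eta03, eta10, eta11, eta12, eta13,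
      eta20, eta21, eta22, eta23, eta30, eta31, eta32, eta33, pdH, hdivS, htrS] at T
    rw [hdivS, htrS]
    linarith [Ssym 0 2 0, Ssym 0 2 2, Ssym 1 2 1, Ssym 1 2 2, Ssym 2 3 2, Ssym 2 3 3,
      Ssym 2 2 2, Ssym 0 0 2, Ssym 1 1 2, Ssym 3 3 2, Ssym 0 2 1, Ssym 0 2 3,
      Ssym 1 2 0, Ssym 1 2 3, Ssym 2 3 0, Ssym 2 3 1]
  have key3 : divH h 3 x = pd 3 (trH h) x := by
    have T := htrace x 3
    simp only [Fin.sum_univ_four, Fierz, eta00, eta01, eta02, eta03, eta10, eta11, eta12, eta13,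
      eta20, eta21, eta22, eta23, eta30, eta31, eta32, eta33, pdH, hdivS, htrS] at T
    rw [hdivS, htrS]
    linarith [Ssym 0 3 0, Ssym 0 3 3, Ssym 1 3 1, Ssym 1 3 3, Ssym 2 3 2, Ssym 2 3 3,
      Ssym 3 3 3, Ssym 0 0 3, Ssym 1 1 3, Ssym 2 2 3, Ssym 0 3 1, Ssym 0 3 2,
      Ssym 1 3 0, Ssym 1 3 2, Ssym 2 3 0, Ssym 2 3 1]
  have key : ∀ d : Fin 4, divH h d x = pd d (trH h) x := by
    intro d
    fin_cases d
    · exact key0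
    · exact key1
    · exact key2
    · exact key3
  have hf : (fun y => f y a b) = fun y => pd a (fun w => φ w b) y - pd b (fun w => φ w a) y :=
    funext fun y => fdef y a b
  simp only [Fierz, pdH, key a, key b]
  rw [hf, pd_sub c ((hd a b) x) ((hd b a) x)]
  linear_combination (1/2) * Ssym a c b - (1/2) * Ssym b c a + (1/2) * Ssym a b c
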